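/- arXiv:2506.03454 — 3 statements merged into one kernel-verified Lean document; each statement's English description precedes it below -/
import Mathlib

section
/- For the microgrid dynamics, the output h_0(x) = x_{2n+1} − x*_{2n+1} (bus voltage error) has relative degree 3: L_g h_0 ≡ 0 and L_g L_f h_0 ≡ 0 on the region v_L > 0, while L_g L_f^2 h_0(x) is a nonzero row vector with entries 1/(C_L L_j C_j) for each input j. -/
open Finset

/-- Drift vector field of the single-bus DC microgrid (6), with state
x = (v, i_t, v_L). -/
noncomputable def drift (n : ℕ) (C L R : Fin n → ℝ) (CL RL PL : ℝ)
    (x : (Fin n → ℝ) × (Fin n → ℝ) × ℝ) : (Fin n → ℝ) × (Fin n → ℝ) × ℝ :=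
  (fun j => -(x.2.1 j) / C j,
   fun j => (x.1 j - R j * x.2.1 j - x.2.2) / L j,
   ((∑ j, x.2.1 j) - x.2.2 / RL - PL / x.2.2) / CL)

/-- j-th column of the control matrix g of (6): the input i_{s_j} enters only
the equation of v_j, with coefficient 1/C_j. -/
noncomputable def gcol (n : ℕ) (C : Fin n → ℝ) (j : Fin n) :
    (Fin n → ℝ) × (Fin n → ℝ) × ℝ :=
  (fun i => if i = j then 1 / C j else 0, 0, 0)

/-- Lie derivative of a scalar function along a vector field. -/
noncomputable def lieD {E : Type*} [NormedAddCommGroup E] [NormedSpace ℝ E]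
    (f : E → E) (h : E → ℝ) (x : E) : ℝ :=
  fderiv ℝ h x (f x)

/-!
`h₀` and `L_f h₀ = v̇_L` depend only on `(i_t, v_L)`, which the inputs do not move, so their
derivatives along each column of `g` vanish; this needs no differentiability, since `fderiv` along
a direction in which a function is constant is zero, either as a line derivative or as a junk
value. Where `v_L ≠ 0`, `L_f² h₀ = (∑ⱼ (vⱼ - Rⱼ iⱼ - v_L) / Lⱼ - (1/R_L - P_L/v_L²) v̇_L) / C_L`
is differentiable and affine in `v` with slope `1 / (C_L Lⱼ)` in `vⱼ`, while the `j`-th column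
of `g` moves `vⱼ` at rate `1 / Cⱼ`.
-/

section LineDerivative

variable {𝕜 : Type*} [NontriviallyNormedField 𝕜] {E F : Type*} [NormedAddCommGroup E]
  [NormedSpace 𝕜 E] [NormedAddCommGroup F] [NormedSpace 𝕜 F]

theorem DifferentiableAt.fderiv_apply_eq_of_forall_add_smul {f : E → F} {x v : E} {c : F}
    (hf : DifferentiableAt 𝕜 f x) (h : ∀ t : 𝕜, f (x + t • v) = f x + t • c) :
    fderiv 𝕜 f x v = c := by
  rw [← hf.lineDeriv_eq_fderiv, lineDeriv, funext h]
  simp [deriv_smul_const]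

theorem fderiv_apply_eq_zero_of_forall_add_smul {f : E → F} {x v : E}
    (h : ∀ t : 𝕜, f (x + t • v) = f x) : fderiv 𝕜 f x v = 0 := by
  by_cases hf : DifferentiableAt 𝕜 f x
  · exact hf.fderiv_apply_eq_of_forall_add_smul fun t => by simp [h]
  · simp [fderiv_zero_of_not_differentiableAt hf]

end LineDerivative

theorem lieD_snd_snd_sub_const {A B : Type*} [NormedAddCommGroup A] [NormedSpace ℝ A]
    [NormedAddCommGroup B] [NormedSpace ℝ B] (F : A × B × ℝ → A × B × ℝ) (c : ℝ) :
    lieD F (fun y => y.2.2 - c) = fun y => (F y).2.2 := by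
  funext y
  rw [lieD, (hasFDerivAt_snd.snd.sub_const c).fderiv]
  rfl

noncomputable def loadVoltageRate (n : ℕ) (CL RL PL : ℝ) (w : (Fin n → ℝ) × ℝ) : ℝ :=
  ((∑ j, w.1 j) - w.2 / RL - PL / w.2) / CL

theorem hasFDerivAt_loadVoltageRate (n : ℕ) (CL RL PL : ℝ) {w : (Fin n → ℝ) × ℝ}
    (hw : w.2 ≠ 0) :
    HasFDerivAt (loadVoltageRate n CL RL PL)
      (CL⁻¹ • (∑ i, (ContinuousLinearMap.proj i).comp (ContinuousLinearMap.fst ℝ _ ℝ)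
        - (RL⁻¹ - PL / w.2 ^ 2) • ContinuousLinearMap.snd ℝ (Fin n → ℝ) ℝ)) w := by
  have hsum : HasFDerivAt (fun w : (Fin n → ℝ) × ℝ => ∑ j, w.1 j)
      (∑ i, (ContinuousLinearMap.proj i).comp (ContinuousLinearMap.fst ℝ _ ℝ)) w :=
    HasFDerivAt.fun_sum fun i _ =>
      (hasFDerivAt_apply i w.1).comp (g := fun v : Fin n → ℝ => v i) w hasFDerivAt_fst
  have hinv : HasFDerivAt (fun w : (Fin n → ℝ) × ℝ => PL * w.2⁻¹)
      ((PL * -(w.2 ^ 2)⁻¹) • ContinuousLinearMap.snd ℝ (Fin n → ℝ) ℝ) w :=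
    ((hasDerivAt_inv hw).const_mul PL).comp_hasFDerivAt w hasFDerivAt_snd
  refine ((((hsum.sub (hasFDerivAt_snd.mul_const RL⁻¹)).sub hinv).mul_const CL⁻¹).congr_fderiv
    ?_).congr_of_eventuallyEq (.of_forall fun w => ?_)
  · ext d <;> simp; ring
  · simp [loadVoltageRate, div_eq_mul_inv]

noncomputable def loadVoltageAccel (n : ℕ) (L R : Fin n → ℝ) (CL RL PL : ℝ)
    (y : (Fin n → ℝ) × (Fin n → ℝ) × ℝ) : ℝ :=
  ((∑ j, (y.1 j - R j * y.2.1 j - y.2.2) / L j)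
    - (RL⁻¹ - PL / y.2.2 ^ 2) * loadVoltageRate n CL RL PL y.2) / CL

theorem lieD_drift_snd_snd_sub_const (n : ℕ) (C L R : Fin n → ℝ) (CL RL PL c : ℝ) :
    lieD (drift n C L R CL RL PL) (fun y => y.2.2 - c)
      = fun y => loadVoltageRate n CL RL PL y.2 :=
  lieD_snd_snd_sub_const _ c

theorem lieD_drift_loadVoltageRate (n : ℕ) (C L R : Fin n → ℝ) (CL RL PL : ℝ)
    {y : (Fin n → ℝ) × (Fin n → ℝ) × ℝ} (hy : y.2.2 ≠ 0) :
    lieD (drift n C L R CL RL PL) (fun y => loadVoltageRate n CL RL PL y.2) y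
      = loadVoltageAccel n L R CL RL PL y := by
  have hD : HasFDerivAt (fun y : (Fin n → ℝ) × (Fin n → ℝ) × ℝ => loadVoltageRate n CL RL PL y.2)
      _ y := (hasFDerivAt_loadVoltageRate n CL RL PL hy).comp y hasFDerivAt_snd
  rw [lieD, hD.fderiv]
  simp only [ContinuousLinearMap.comp_apply, smul_apply, sub_apply, FunLike.coe_sum,
    Finset.sum_apply, ContinuousLinearMap.proj_apply, ContinuousLinearMap.coe_fst',
    ContinuousLinearMap.coe_snd', smul_eq_mul]
  exact inv_mul_eq_div _ _

theorem lieD_drift_loadVoltageRate_eventuallyEq (n : ℕ) (C L R : Fin n → ℝ) (CL RL PL : ℝ)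
    {x : (Fin n → ℝ) × (Fin n → ℝ) × ℝ} (hx : x.2.2 ≠ 0) :
    lieD (drift n C L R CL RL PL) (fun y => loadVoltageRate n CL RL PL y.2)
      =ᶠ[nhds x] loadVoltageAccel n L R CL RL PL := by
  filter_upwards [continuous_snd.snd.continuousAt.eventually_ne hx] with y hy
  exact lieD_drift_loadVoltageRate n C L R CL RL PL hy

theorem differentiableAt_loadVoltageAccel (n : ℕ) (L R : Fin n → ℝ) (CL RL PL : ℝ)
    {x : (Fin n → ℝ) × (Fin n → ℝ) × ℝ} (hx : x.2.2 ≠ 0) :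
    DifferentiableAt ℝ (loadVoltageAccel n L R CL RL PL) x := by
  unfold loadVoltageAccel loadVoltageRate
  fun_prop (disch := simp [hx])

theorem snd_add_smul_gcol (n : ℕ) (C : Fin n → ℝ) (j : Fin n)
    (y : (Fin n → ℝ) × (Fin n → ℝ) × ℝ) (t : ℝ) : (y + t • gcol n C j).2 = y.2 := by
  simp [gcol]

theorem loadVoltageAccel_add_smul_gcol (n : ℕ) (C L R : Fin n → ℝ) (CL RL PL : ℝ) (j : Fin n)
    (y : (Fin n → ℝ) × (Fin n → ℝ) × ℝ) (t : ℝ) :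
    loadVoltageAccel n L R CL RL PL (y + t • gcol n C j)
      = loadVoltageAccel n L R CL RL PL y + t • (1 / (CL * L j * C j)) := by
  have hsum : ∑ i, ((y + t • gcol n C j).1 i - R i * y.2.1 i - y.2.2) / L i
      = (∑ i, (y.1 i - R i * y.2.1 i - y.2.2) / L i) + t / (C j * L j) := by
    calc _ = ∑ i, ((y.1 i - R i * y.2.1 i - y.2.2) / L i
          + if i = j then t / (C j * L j) else 0) := by
          refine Finset.sum_congr rfl fun i _ => ?_
          by_cases hij : i = j
          · subst hij
            simp only [gcol, one_div, Prod.smul_mk, smul_zero, smul_eq_mul, mul_zero, Prod.fst_add,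
              Pi.add_apply, Pi.smul_apply, ↓reduceIte]
            ring
          · simp [gcol, hij]
      _ = _ := by rw [Finset.sum_add_distrib, Finset.sum_ite_eq']; simp
  rw [loadVoltageAccel, snd_add_smul_gcol, hsum, loadVoltageAccel]
  ring

theorem h0_relative_degree_three_general
    (n : ℕ)
    (C L R : Fin n → ℝ) (CL RL PL vstar : ℝ)
    (hC : ∀ j, 0 < C j) (hL : ∀ j, 0 < L j)
    (hCL : 0 < CL) :
    ∀ x : (Fin n → ℝ) × (Fin n → ℝ) × ℝ, 0 < x.2.2 → ∀ j : Fin n,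
      (fderiv ℝ (fun y : (Fin n → ℝ) × (Fin n → ℝ) × ℝ => y.2.2 - vstar) x)
        (gcol n C j) = 0 ∧
      (fderiv ℝ (lieD (drift n C L R CL RL PL)
          (fun y => y.2.2 - vstar)) x) (gcol n C j) = 0 ∧
      (fderiv ℝ (lieD (drift n C L R CL RL PL)
          (lieD (drift n C L R CL RL PL) (fun y => y.2.2 - vstar))) x)
        (gcol n C j) = 1 / (CL * L j * C j) ∧
      1 / (CL * L j * C j) ≠ 0 := by
  intro x hx j
  rw [lieD_drift_snd_snd_sub_const,
    (lieD_drift_loadVoltageRate_eventuallyEq n C L R CL RL PL hx.ne').fderiv_eq]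
  refine ⟨fderiv_apply_eq_zero_of_forall_add_smul fun t => by rw [snd_add_smul_gcol],
    fderiv_apply_eq_zero_of_forall_add_smul fun t => by rw [snd_add_smul_gcol],
    (differentiableAt_loadVoltageAccel n L R CL RL PL hx.ne').fderiv_apply_eq_of_forall_add_smul
      (loadVoltageAccel_add_smul_gcol n C L R CL RL PL j x),
    one_div_ne_zero (mul_ne_zero (mul_ne_zero hCL.ne' (hL j).ne') (hC j).ne')⟩

/-- the bus-voltage error output h₀(x) = v_L − v_L* has relative
degree 3 on {v_L > 0}: L_g h₀ ≡ 0, L_g L_f h₀ ≡ 0, and L_g L_f² h₀ is the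
nonzero row vector with entries 1/(C_L L_j C_j). -/
theorem h0_relative_degree_three
    (n : ℕ) (hn : 1 ≤ n)
    (C L R : Fin n → ℝ) (CL RL PL vstar : ℝ)
    (hC : ∀ j, 0 < C j) (hL : ∀ j, 0 < L j) (hR : ∀ j, 0 < R j)
    (hCL : 0 < CL) (hRL : 0 < RL) (hPL : 0 < PL) :
    ∀ x : (Fin n → ℝ) × (Fin n → ℝ) × ℝ, 0 < x.2.2 → ∀ j : Fin n,
      (fderiv ℝ (fun y : (Fin n → ℝ) × (Fin n → ℝ) × ℝ => y.2.2 - vstar) x)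
        (gcol n C j) = 0 ∧
      (fderiv ℝ (lieD (drift n C L R CL RL PL)
          (fun y => y.2.2 - vstar)) x) (gcol n C j) = 0 ∧
      (fderiv ℝ (lieD (drift n C L R CL RL PL)
          (lieD (drift n C L R CL RL PL) (fun y => y.2.2 - vstar))) x)
        (gcol n C j) = 1 / (CL * L j * C j) ∧
      1 / (CL * L j * C j) ≠ 0 :=
  h0_relative_degree_three_general n C L R CL RL PL vstar hC hL hCL
end

section
/- The decoupling matrix g̃_η ∈ ℝ^{n×n}, whose first row is (1/(C_L L_1 C_1), ..., 1/(C_L L_n C_n)) and whose (j+1)-th row (j = 1,...,n−1) has 1/C_j in column j, −1/C_{j+1} in column j+1, and zeros elsewhere, is invertible for all positive parameter values C_j, L_j, C_L > 0. -/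
/-- the decoupling matrix g̃_η — first row
(1/(C_L L_1 C_1), …, 1/(C_L L_n C_n)); for i ≥ 1 its row has 1/C_{i-1} in
column i−1 and −1/C_i in column i, zeros elsewhere — is invertible for all
positive parameters. -/
theorem decoupling_matrix_invertible
    (n : ℕ) (hn : 1 ≤ n)
    (C L : Fin n → ℝ) (CL : ℝ)
    (hC : ∀ j, 0 < C j) (hL : ∀ j, 0 < L j) (hCL : 0 < CL)
    (M : Matrix (Fin n) (Fin n) ℝ)
    (hM : ∀ i k : Fin n,
      M i k = if (i : ℕ) = 0 then 1 / (CL * L k * C k)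
              else if (k : ℕ) + 1 = (i : ℕ) then 1 / C k
              else if k = i then -1 / C k
              else 0) :
    IsUnit M := by
  rw [Matrix.isUnit_iff_isUnit_det, isUnit_iff_ne_zero]
  intro hdet
  obtain ⟨v, hv0, hv⟩ := Matrix.exists_mulVec_eq_zero_iff.2 hdet
  have h0 : (0 : ℕ) < n := hn
  set z : Fin n := ⟨0, h0⟩ with hz
  set c : ℝ := v z / C z with hc
  have key : ∀ m : ℕ, ∀ hm : m < n, v ⟨m, hm⟩ / C ⟨m, hm⟩ = c := by
    intro m
    induction m with
    | zero => intro hm; rfl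
    | succ m ih =>
      intro hm
      have hm' : m < n := Nat.lt_of_succ_lt hm
      set a : Fin n := ⟨m, hm'⟩ with ha
      set i : Fin n := ⟨m + 1, hm⟩ with hi
      have hai : a ≠ i := by
        simp [ha, hi, Fin.ext_iff]
      have hrow := congrFun hv i
      rw [Matrix.mulVec, Pi.zero_apply] at hrow
      have hsum : (dotProduct (M i) v) = M i a * v a + M i i * v i := by
        apply Finset.sum_eq_add_of_mem a i (Finset.mem_univ _) (Finset.mem_univ _) hai
        intro k _ ⟨hka, hki⟩
        have : M i k = 0 := by
          rw [hM]
          have h1 : ((i : Fin n) : ℕ) ≠ 0 := by simp [hi]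
          have h2 : (k : ℕ) + 1 ≠ (i : ℕ) := by
            simp only [hi]
            intro h
            exact hka (Fin.ext (Nat.succ_injective h))
          simp [h1, h2, hki]
        simp [this]
      have hMa : M i a = 1 / C a := by
        rw [hM]; simp [hi, ha]
      have hMi : M i i = -1 / C i := by
        rw [hM]; simp [hi]
      rw [hsum, hMa, hMi] at hrow
      have hCa := (hC a).ne'
      have hCi := (hC i).ne'
      have : v i / C i = v a / C a := by
        field_simp at hrow ⊢
        linarith
      rw [this]
      exact ih hm'
  have hvk : ∀ k : Fin n, v k = c * C k := by
    intro k
    have := key k k.isLt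
    have hk : (⟨(k : ℕ), k.isLt⟩ : Fin n) = k := Fin.ext rfl
    rw [hk, div_eq_iff (hC k).ne'] at this
    exact this
  have hrow0 := congrFun hv z
  rw [Matrix.mulVec, Pi.zero_apply] at hrow0
  have hsum0 : dotProduct (M z) v = ∑ k : Fin n, c * (1 / (CL * L k)) := by
    apply Finset.sum_congr rfl
    intro k _
    rw [hM, hvk k]
    have hz0 : ((z : Fin n) : ℕ) = 0 := rfl
    rw [if_pos hz0]
    have h1 := (hC k).ne'
    have h2 := (hL k).ne'
    have h3 := hCL.ne'
    field_simp
  rw [hsum0, ← Finset.mul_sum] at hrow0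
  have hpos : 0 < ∑ k : Fin n, 1 / (CL * L k) := by
    apply Finset.sum_pos
    · intro k _
      have h1 := hL k
      positivity
    · exact Finset.univ_nonempty_iff.2 ⟨z⟩
  have hc0 : c = 0 := by
    rcases mul_eq_zero.1 hrow0 with h | h
    · exact h
    · exact absurd h hpos.ne'
  apply hv0
  funext k
  rw [hvk k, hc0, zero_mul]
  rfl
end

section
/- Once the outputs are stabilized (η ≡ 0, so all converter voltages equal and bus voltage constant), each zero-dynamics coordinate z_j = R_j i_{t_j} − R_{j+1} i_{t_{j+1}} evolves as ż_j = −((R_j + R_{j+1})/(L_j + L_{j+1}))·z_j·μ_j for a positive constant μ_j depending on the parameters; in particular z_j(t) → 0 exponentially with rate determined by −(R_j + R_{j+1})/(L_j + L_{j+1}). -/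
/-!
Each branch drop `R_j i_{t_j} - (v - v_L)` solves `ẋ = -(R_j / L_j) x`, so it is an exponential;
`z` is the difference of two such exponentials and hence decays at least at the slower rate
`min (R₁ / L₁) (R₂ / L₂)`, which is `(R₁ + R₂) / (L₁ + L₂)` times a positive constant `μ`.
-/

open Real

theorem eq_mul_exp_of_hasDerivAt_mul_self {g : ℝ → ℝ} {c : ℝ}
    (hg : ∀ t, HasDerivAt g (c * g t) t) (t : ℝ) :
    g t = g 0 * exp (c * t) := by
  have hconst : ∀ s, HasDerivAt (fun s => g s * exp (-(c * s))) 0 s := by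
    intro s
    have hexp : HasDerivAt (fun s => exp (-(c * s))) (exp (-(c * s)) * -c) s :=
      ((hasDerivAt_id s).const_mul c).neg.exp.congr_deriv (by simp)
    exact ((hg s).mul hexp).congr_deriv (by ring)
  have h := is_const_of_deriv_eq_zero (fun s => (hconst s).differentiableAt)
    (fun s => (hconst s).deriv) t 0
  simp only [mul_zero, neg_zero, exp_zero, mul_one] at h
  rw [← h, mul_assoc, ← exp_add, neg_add_cancel, exp_zero, mul_one]

theorem resistive_drop_eq_mul_exp {R L w : ℝ} (hL : L ≠ 0) {i : ℝ → ℝ}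
    (hi : ∀ t, HasDerivAt i ((w - R * i t) / L) t) (t : ℝ) :
    R * i t - w = (R * i 0 - w) * exp (-(R / L) * t) :=
  eq_mul_exp_of_hasDerivAt_mul_self (g := fun s => R * i s - w)
    (fun s => (((hi s).const_mul R).sub_const w).congr_deriv (by field_simp; ring)) t

theorem abs_sub_mul_exp_le {x y a b t : ℝ} (ht : 0 ≤ t) :
    |x * exp (-a * t) - y * exp (-b * t)| ≤ (|x| + |y|) * exp (-min a b * t) := by
  calc |x * exp (-a * t) - y * exp (-b * t)|
      ≤ |x| * exp (-a * t) + |y| * exp (-b * t) := by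
        simpa only [abs_mul, abs_exp] using abs_sub (x * exp (-a * t)) (y * exp (-b * t))
    _ ≤ |x| * exp (-min a b * t) + |y| * exp (-min a b * t) := by
        gcongr
        exacts [min_le_left a b, min_le_right a b]
    _ = (|x| + |y|) * exp (-min a b * t) := by ring

/-- on the zero-dynamics manifold (all converter voltages equal
to v, bus voltage v_L constant), z = R₁ i_{t₁} − R₂ i_{t₂} satisfies
ż = (R₁/L₁)(v − v_L − R₁ i_{t₁}) − (R₂/L₂)(v − v_L − R₂ i_{t₂}), and z(t) → 0
exponentially with rate −((R₁+R₂)/(L₁+L₂))·μ for some constant μ > 0. -/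
theorem zero_dynamics_exponentially_stable
    (R₁ R₂ L₁ L₂ v vL : ℝ)
    (hR₁ : 0 < R₁) (hR₂ : 0 < R₂) (hL₁ : 0 < L₁) (hL₂ : 0 < L₂)
    (it₁ it₂ : ℝ → ℝ)
    (h₁ : ∀ t, HasDerivAt it₁ ((v - R₁ * it₁ t - vL) / L₁) t)
    (h₂ : ∀ t, HasDerivAt it₂ ((v - R₂ * it₂ t - vL) / L₂) t) :
    (∀ t, HasDerivAt (fun s => R₁ * it₁ s - R₂ * it₂ s)
      ((R₁ / L₁) * (v - vL - R₁ * it₁ t)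
        - (R₂ / L₂) * (v - vL - R₂ * it₂ t)) t) ∧
    (∃ μ > (0 : ℝ), ∃ M ≥ (0 : ℝ), ∀ t ≥ (0 : ℝ),
      |R₁ * it₁ t - R₂ * it₂ t| ≤
        M * Real.exp (-((R₁ + R₂) / (L₁ + L₂)) * μ * t)) := by
  refine ⟨fun t => (((h₁ t).const_mul R₁).sub ((h₂ t).const_mul R₂)).congr_deriv (by ring), ?_⟩
  have h₁' : ∀ t, HasDerivAt it₁ ((v - vL - R₁ * it₁ t) / L₁) t := fun t => by
    simpa only [sub_right_comm] using h₁ t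
  have h₂' : ∀ t, HasDerivAt it₂ ((v - vL - R₂ * it₂ t) / L₂) t := fun t => by
    simpa only [sub_right_comm] using h₂ t
  set α := min (R₁ / L₁) (R₂ / L₂)
  have hα : 0 < α := lt_min (div_pos hR₁ hL₁) (div_pos hR₂ hL₂)
  have hRs : 0 < R₁ + R₂ := add_pos hR₁ hR₂
  have hLs : 0 < L₁ + L₂ := add_pos hL₁ hL₂
  refine ⟨α * (L₁ + L₂) / (R₁ + R₂), by positivity,
    |R₁ * it₁ 0 - (v - vL)| + |R₂ * it₂ 0 - (v - vL)|, by positivity, fun t ht => ?_⟩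
  have hrate : -((R₁ + R₂) / (L₁ + L₂)) * (α * (L₁ + L₂) / (R₁ + R₂)) = -α := by
    field_simp
  rw [hrate]
  calc |R₁ * it₁ t - R₂ * it₂ t|
      = |(R₁ * it₁ 0 - (v - vL)) * exp (-(R₁ / L₁) * t)
          - (R₂ * it₂ 0 - (v - vL)) * exp (-(R₂ / L₂) * t)| := by
        rw [← resistive_drop_eq_mul_exp hL₁.ne' h₁', ← resistive_drop_eq_mul_exp hL₂.ne' h₂',
          sub_sub_sub_cancel_right]
    _ ≤ _ := abs_sub_mul_exp_le ht
end
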